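/- Let λ > 0 and f ∈ C⁰[a,b]. Suppose P = [a = t₀ < t₁ < ⋯ < t_k < t_{k+1} = b] is a partition of [a,b] such that Φ_{[a,b],λ,P}(f) = Φ_{[a,b],λ}(f) and |P| is maximal among all partitions attaining this value. If [t_{j−1},t_j] is an uptick (resp. downtick), then [t_{j−1},t_j] contains no λ-downtick (resp. no λ-uptick); that is, if [t_{j−1},t_j] is an uptick then there are no x ≤ y in [t_{j−1},t_j] with f(y) ≤ f(x) − λ. -/

import Mathlib

/-!
Suppose the uptick `[t i, t (i + 1)]` of a partition `P` contained a `λ`-downtick `[x, y]`.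
Inserting `x` and `y` into `P` (only one of them if the other is already a partition point)
does not decrease `Φ_{λ,P}`: by the triangle inequality the variation gains at least
`2 (f x - f y) ≥ 2λ`, which pays the penalty of the new points. For continuous `f` the values
`Φ_{λ,P}` are bounded above, so an optimal `P` would not have maximal `|P|`.
Downticks reduce to upticks through `f ↦ -f`.
-/

open scoped BigOperators ENNReal
open MeasureTheory Set Filter

/-- A partition `a = t₀ < t₁ < ⋯ < t_k < t_{k+1} = b` of `[a,b]` with `k` interior points. -/
structure RTVPartition (a b : ℝ) where
  k : ℕ
  t : ℕ → ℝ
  ht0 : t 0 = a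
  htlast : t (k + 1) = b
  hmono : ∀ i, i ≤ k → t i < t (i + 1)

/-- `Φ_{[a,b],λ,P}(f) = ∑_{i=1}^{k+1} |f(t_i) − f(t_{i−1})| − λ·|P|`. -/
noncomputable def phiP (lam a b : ℝ) (f : ℝ → ℝ) (P : RTVPartition a b) : ℝ :=
  (∑ i ∈ Finset.range (P.k + 1), |f (P.t (i + 1)) - f (P.t i)|) - lam * P.k

/-- The regularized total variation `Φ_{[a,b],λ}(f) = sup_P Φ_{[a,b],λ,P}(f)`. -/
noncomputable def phiRTV (lam a b : ℝ) (f : ℝ → ℝ) : ℝ :=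
  ⨆ P : RTVPartition a b, phiP lam a b f P

namespace RTVPartition

variable {a b : ℝ} (P : RTVPartition a b)

lemma strictMonoOn_t : StrictMonoOn P.t (Iic (P.k + 1)) :=
  strictMonoOn_Iic_of_lt_succ fun m hm => by
    simpa only [Order.succ_eq_add_one] using P.hmono m (by omega)

lemma t_mem_Icc {i : ℕ} (hi : i ≤ P.k + 1) : P.t i ∈ Icc a b := by
  have hmono := P.strictMonoOn_t.monotoneOn
  constructor
  · simpa only [P.ht0] using hmono (by simp) hi (Nat.zero_le i)
  · simpa only [P.htlast] using hmono hi (by simp) hi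

def insertPoint (i : ℕ) (hi : i ≤ P.k) (c : ℝ) (h₁ : P.t i < c) (h₂ : c < P.t (i + 1)) :
    RTVPartition a b where
  k := P.k + 1
  t m := if m ≤ i then P.t m else if m = i + 1 then c else P.t (m - 1)
  ht0 := by simp [P.ht0]
  htlast := by simpa [show ¬P.k + 1 + 1 ≤ i by omega, show P.k + 1 ≠ i by omega] using P.htlast
  hmono m hm := by
    rcases lt_trichotomy m i with h | rfl | h
    · simpa [h.le, show m + 1 ≤ i by omega] using P.hmono m (by omega)
    · simpa using h₁
    · rcases eq_or_lt_of_le (Nat.succ_le_of_lt h) with rfl | h'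
      · simpa using h₂
      · have := P.hmono (m - 1) (by omega)
        simp only [show ¬m ≤ i by omega, show ¬m + 1 ≤ i by omega, show m ≠ i + 1 by omega,
          show m + 1 ≠ i + 1 by omega, if_false, Nat.add_sub_cancel]
        rwa [Nat.sub_add_cancel (by omega)] at this

section insertPoint

variable {i : ℕ} {hi : i ≤ P.k} {c : ℝ} {h₁ : P.t i < c} {h₂ : c < P.t (i + 1)}

@[simp] lemma insertPoint_k : (P.insertPoint i hi c h₁ h₂).k = P.k + 1 := rfl

lemma insertPoint_t_of_le {m : ℕ} (hm : m ≤ i) : (P.insertPoint i hi c h₁ h₂).t m = P.t m :=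
  if_pos hm

@[simp] lemma insertPoint_t_succ : (P.insertPoint i hi c h₁ h₂).t (i + 1) = c := by
  simp [insertPoint]

lemma insertPoint_t_of_lt {m : ℕ} (hm : i + 1 < m) :
    (P.insertPoint i hi c h₁ h₂).t m = P.t (m - 1) := by
  simp [insertPoint, show ¬m ≤ i by omega, show m ≠ i + 1 by omega]

lemma phiP_insertPoint (lam : ℝ) (f : ℝ → ℝ) :
    phiP lam a b f (P.insertPoint i hi c h₁ h₂) = phiP lam a b f P +
      (|f c - f (P.t i)| + |f (P.t (i + 1)) - f c| - |f (P.t (i + 1)) - f (P.t i)| - lam) := by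
  set Q := P.insertPoint i hi c h₁ h₂
  have hsplitQ : Q.k + 1 = i + 2 + (P.k - i) := by simp only [Q, insertPoint_k]; omega
  have hsplitP : P.k + 1 = i + 1 + (P.k - i) := by omega
  have hhead : ∀ n ∈ Finset.range i, |f (Q.t (n + 1)) - f (Q.t n)| =
      |f (P.t (n + 1)) - f (P.t n)| := fun n hn => by
    rw [Finset.mem_range] at hn
    rw [P.insertPoint_t_of_le (by omega), P.insertPoint_t_of_le (by omega)]
  have htail : ∀ n ∈ Finset.range (P.k - i), |f (Q.t (i + 2 + n + 1)) - f (Q.t (i + 2 + n))| =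
      |f (P.t (i + 1 + n + 1)) - f (P.t (i + 1 + n))| := fun n _ => by
    rw [P.insertPoint_t_of_lt (by omega), P.insertPoint_t_of_lt (by omega)]
    congr 4 <;> omega
  unfold phiP
  rw [hsplitQ, hsplitP, Finset.sum_range_add _ (i + 2), Finset.sum_range_add _ (i + 1),
    Finset.sum_range_succ _ (i + 1), Finset.sum_range_succ _ i, Finset.sum_range_succ _ i,
    Finset.sum_congr rfl hhead, Finset.sum_congr rfl htail, P.insertPoint_t_of_le le_rfl,
    insertPoint_t_succ,
    P.insertPoint_t_of_lt (by omega : i + 1 < i + 1 + 1), insertPoint_k]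
  push_cast
  ring

end insertPoint

end RTVPartition

lemma ContinuousOn.exists_abs_sub_le_add_mul {f : ℝ → ℝ} {a b ε : ℝ}
    (hf : ContinuousOn f (Icc a b)) (hε : 0 < ε) :
    ∃ C, ∀ u ∈ Icc a b, ∀ v ∈ Icc a b, u ≤ v → |f v - f u| ≤ ε + C * (v - u) := by
  obtain ⟨M, hM⟩ := isCompact_Icc.exists_bound_of_continuousOn hf
  obtain ⟨δ, hδ, hδf⟩ :=
    Metric.uniformContinuousOn_iff.mp (isCompact_Icc.uniformContinuousOn_of_continuous hf) ε hε
  refine ⟨2 * M / δ, fun u hu v hv huv => ?_⟩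
  have hMu := hM u hu
  have hMv := hM v hv
  rw [Real.norm_eq_abs] at hMu hMv
  have hC : 0 ≤ 2 * M / δ := div_nonneg (by linarith [abs_nonneg (f u)]) hδ.le
  rcases lt_or_ge (v - u) δ with hnear | hfar
  · have hclose := hδf v hv u hu (by rwa [Real.dist_eq, abs_of_nonneg (sub_nonneg.2 huv)])
    rw [Real.dist_eq] at hclose
    nlinarith [sub_nonneg.2 huv]
  · calc |f v - f u| ≤ |f v| + |f u| := abs_sub _ _
      _ ≤ 2 * M / δ * δ := by rw [div_mul_cancel₀ _ hδ.ne']; linarith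
      _ ≤ 2 * M / δ * (v - u) := by gcongr
      _ ≤ ε + 2 * M / δ * (v - u) := by linarith

section phiP

variable {lam a b : ℝ} {f : ℝ → ℝ}

lemma phiP_bddAbove (hlam : 0 < lam) (hf : ContinuousOn f (Icc a b)) :
    BddAbove (range (phiP lam a b f)) := by
  -- with `ε = lam` the constant term of each summand is paid by the penalty; the rest telescopes
  obtain ⟨C, hC⟩ := hf.exists_abs_sub_le_add_mul hlam
  refine ⟨lam + C * (b - a), ?_⟩
  rintro _ ⟨Q, rfl⟩
  have hterm : ∀ n ∈ Finset.range (Q.k + 1),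
      |f (Q.t (n + 1)) - f (Q.t n)| ≤ lam + C * (Q.t (n + 1) - Q.t n) := fun n hn => by
    rw [Finset.mem_range] at hn
    exact hC _ (Q.t_mem_Icc (by omega)) _ (Q.t_mem_Icc (by omega)) (Q.hmono n (by omega)).le
  have hsum := Finset.sum_le_sum hterm
  rw [Finset.sum_add_distrib, ← Finset.mul_sum, Finset.sum_range_sub Q.t, Q.htlast, Q.ht0,
    Finset.sum_const, Finset.card_range, nsmul_eq_mul] at hsum
  unfold phiP
  push_cast at hsum
  linarith

lemma phiP_neg (P : RTVPartition a b) : phiP lam a b (-f) P = phiP lam a b f P := by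
  unfold phiP
  congr 1
  refine Finset.sum_congr rfl fun n _ => ?_
  rw [Pi.neg_apply, Pi.neg_apply, neg_sub_neg, abs_sub_comm]

lemma phiRTV_neg : phiRTV lam a b (-f) = phiRTV lam a b f := by
  simp only [phiRTV, phiP_neg]

lemma phiP_lt_of_k_lt (hbdd : BddAbove (range (phiP lam a b f))) {P : RTVPartition a b}
    (hopt : phiP lam a b f P = phiRTV lam a b f)
    (hmax : ∀ Q : RTVPartition a b, phiP lam a b f Q = phiRTV lam a b f → Q.k ≤ P.k)
    {Q : RTVPartition a b} (hk : P.k < Q.k) : phiP lam a b f Q < phiP lam a b f P := by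
  by_contra! hle
  have := hmax Q (le_antisymm (le_ciSup hbdd Q) (hopt ▸ hle))
  omega

lemma RTVPartition.exists_k_lt_phiP_le_of_downtick_of_uptick (hlam : 0 < lam)
    (P : RTVPartition a b) {i : ℕ} (hi : i ≤ P.k) (hup : f (P.t i) < f (P.t (i + 1)))
    {x y : ℝ} (hx : x ∈ Icc (P.t i) (P.t (i + 1))) (hy : y ∈ Icc (P.t i) (P.t (i + 1)))
    (hxy : x ≤ y) (hdown : f y ≤ f x - lam) :
    ∃ Q : RTVPartition a b, P.k < Q.k ∧ phiP lam a b f P ≤ phiP lam a b f Q := by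
  have hxy : x < y := hxy.lt_of_ne (by rintro rfl; linarith)
  have hjump := abs_of_pos (sub_pos.2 hup)
  rcases hx.1.eq_or_lt with rfl | hx₁ <;> rcases hy.2.eq_or_lt with rfl | hy₂
  · linarith
  · refine ⟨P.insertPoint i hi y hxy hy₂, by simp, ?_⟩
    rw [P.phiP_insertPoint, hjump]
    linarith [neg_le_abs (f y - f (P.t i)), le_abs_self (f (P.t (i + 1)) - f y)]
  · refine ⟨P.insertPoint i hi x hx₁ hxy, by simp, ?_⟩
    rw [P.phiP_insertPoint, hjump]
    linarith [le_abs_self (f x - f (P.t i)), neg_le_abs (f (P.t (i + 1)) - f x)]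
  · set Q := P.insertPoint i hi x hx₁ (hxy.trans hy₂)
    have hQ : Q.t (i + 1 + 1) = P.t (i + 1) := P.insertPoint_t_of_lt (by omega)
    refine ⟨Q.insertPoint (i + 1) (by simp [Q]; omega) y (by simpa [Q] using hxy)
      (by rwa [hQ]), by simp [Q], ?_⟩
    rw [Q.phiP_insertPoint, hQ, P.insertPoint_t_succ, P.phiP_insertPoint, hjump]
    linarith [le_abs_self (f x - f (P.t i)), neg_le_abs (f y - f x),
      le_abs_self (f (P.t (i + 1)) - f y)]

lemma not_exists_downtick_of_uptick (hlam : 0 < lam) (hf : ContinuousOn f (Icc a b))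
    {P : RTVPartition a b} (hopt : phiP lam a b f P = phiRTV lam a b f)
    (hmax : ∀ Q : RTVPartition a b, phiP lam a b f Q = phiRTV lam a b f → Q.k ≤ P.k)
    {i : ℕ} (hi : i ≤ P.k) (hup : f (P.t i) < f (P.t (i + 1))) :
    ¬∃ x y, x ∈ Icc (P.t i) (P.t (i + 1)) ∧ y ∈ Icc (P.t i) (P.t (i + 1)) ∧ x ≤ y ∧
      f y ≤ f x - lam := by
  rintro ⟨x, y, hx, hy, hxy, hdown⟩
  obtain ⟨Q, hk, hle⟩ :=
    P.exists_k_lt_phiP_le_of_downtick_of_uptick hlam hi hup hx hy hxy hdown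
  exact (phiP_lt_of_k_lt (phiP_bddAbove hlam hf) hopt hmax hk).not_ge hle

end phiP

/-- If `P` attains `Φ_{[a,b],λ}(f)` with `|P|` maximal among all partitions attaining it, and
`[t_{j−1},t_j]` is an uptick (resp. downtick), then `[t_{j−1},t_j]` contains no `λ`-downtick
(resp. no `λ`-uptick): if `[t_{j−1},t_j]` is an uptick there are no `x ≤ y` in
`[t_{j−1},t_j]` with `f(y) ≤ f(x) − λ`, and symmetrically for a downtick. -/
theorem maximal_optimal_partition_no_wiggle (lam a b : ℝ) (hlam : 0 < lam) (f : ℝ → ℝ)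
    (hf : ContinuousOn f (Icc a b)) (P : RTVPartition a b)
    (hopt : phiP lam a b f P = phiRTV lam a b f)
    (hmax : ∀ Q : RTVPartition a b, phiP lam a b f Q = phiRTV lam a b f → Q.k ≤ P.k)
    (j : ℕ) (hj1 : 1 ≤ j) (hjk : j ≤ P.k + 1) :
    (f (P.t (j - 1)) < f (P.t j) →
      ¬∃ x y, x ∈ Icc (P.t (j - 1)) (P.t j) ∧ y ∈ Icc (P.t (j - 1)) (P.t j) ∧ x ≤ y ∧
        f y ≤ f x - lam) ∧
    (f (P.t j) < f (P.t (j - 1)) →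
      ¬∃ x y, x ∈ Icc (P.t (j - 1)) (P.t j) ∧ y ∈ Icc (P.t (j - 1)) (P.t j) ∧ x ≤ y ∧
        f x + lam ≤ f y) := by
  obtain ⟨i, rfl⟩ : ∃ i, j = i + 1 := ⟨j - 1, by omega⟩
  rw [Nat.add_sub_cancel]
  have hi : i ≤ P.k := by omega
  refine ⟨not_exists_downtick_of_uptick hlam hf hopt hmax hi, fun hdown => ?_⟩
  have hopt' : phiP lam a b (-f) P = phiRTV lam a b (-f) := by rwa [phiP_neg, phiRTV_neg]
  have hmax' (Q : RTVPartition a b) (hQ : phiP lam a b (-f) Q = phiRTV lam a b (-f)) :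
      Q.k ≤ P.k := hmax Q (by rwa [phiP_neg, phiRTV_neg] at hQ)
  have hup : (-f) (P.t i) < (-f) (P.t (i + 1)) := neg_lt_neg hdown
  rintro ⟨x, y, hx, hy, hxy, hlamup⟩
  exact not_exists_downtick_of_uptick hlam hf.neg hopt' hmax' hi hup
    ⟨x, y, hx, hy, hxy, by simp only [Pi.neg_apply]; linarith⟩
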